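/- arXiv:1204.4010 — 5 statements merged into one kernel-verified Lean document; each statement's English description precedes it below -/
import Mathlib

section
/- The bondage number of the complete graph K_n (n ≥ 2) equals ⌈n/2⌉. -/
open SimpleGraph

variable {V : Type*}

/-- `S` is a dominating set of `G`: every vertex is in `S` or has a neighbor in `S`. -/
def SimpleGraph.IsDomSet (G : SimpleGraph V) (S : Finset V) : Prop :=
  ∀ v : V, v ∈ S ∨ ∃ u ∈ S, G.Adj u v

/-- The domination number of a finite graph. -/
noncomputable def SimpleGraph.domNum [Fintype V] (G : SimpleGraph V) : ℕ :=
  sInf {n | ∃ S : Finset V, S.card = n ∧ G.IsDomSet S}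

/-- The bondage number: the minimum size of a set of edges of `G` whose removal
increases the domination number. -/
noncomputable def SimpleGraph.bondageNum [Fintype V] (G : SimpleGraph V) : ℕ :=
  sInf {n | ∃ B : Finset (Sym2 V), B.card = n ∧ ↑B ⊆ G.edgeSet ∧
    G.domNum < (G.deleteEdges ↑B).domNum}

/-! A single vertex `v` dominates `K_n` with the edge set `B` removed exactly when no edge of `B`
is incident to `v`. Since `γ(K_n) = 1`, removing `B` raises the domination number if and only if
`B` is an edge cover. An edge covers two vertices, so an edge cover has at least `⌈n/2⌉` edges,
and pairing each vertex `i < ⌈n/2⌉` with `i + ⌊n/2⌋` gives one of exactly that size. -/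

open Finset

namespace SimpleGraph

def IsEdgeCover (G : SimpleGraph V) (B : Set (Sym2 V)) : Prop :=
  B ⊆ G.edgeSet ∧ ∀ v, ∃ e ∈ B, v ∈ e

lemma IsEdgeCover.card_le_two_mul_card [Fintype V] [DecidableEq V] {G : SimpleGraph V}
    {B : Finset (Sym2 V)} (hB : G.IsEdgeCover ↑B) : Fintype.card V ≤ 2 * B.card := by
  have hcover : (univ : Finset V) ⊆ B.biUnion Sym2.toFinset := fun v _ => by
    obtain ⟨e, he, hve⟩ := hB.2 v
    exact mem_biUnion.2 ⟨e, he, Sym2.mem_toFinset.2 hve⟩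
  calc Fintype.card V ≤ (B.biUnion Sym2.toFinset).card := card_le_card hcover
    _ ≤ B.card * 2 := card_biUnion_le_card_mul _ _ _ fun e _ => by
        rw [Sym2.card_toFinset]; split_ifs <;> omega
    _ = 2 * B.card := mul_comm _ _

lemma IsDomSet.mono {G : SimpleGraph V} {S T : Finset V} (h : G.IsDomSet S) (hST : S ⊆ T) :
    G.IsDomSet T := fun v =>
  (h v).imp (fun hv => hST hv) fun ⟨u, hu, huv⟩ => ⟨u, hST hu, huv⟩

lemma isDomSet_singleton_iff (G : SimpleGraph V) (v : V) :
    G.IsDomSet {v} ↔ ∀ w ≠ v, G.Adj v w := by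
  simp only [IsDomSet, mem_singleton, exists_eq_left]
  exact forall_congr' fun w => or_iff_not_imp_left

variable [Fintype V] (G : SimpleGraph V)

lemma domNum_le_card {S : Finset V} (h : G.IsDomSet S) : G.domNum ≤ S.card :=
  Nat.sInf_le ⟨S, rfl, h⟩

lemma exists_isDomSet_card_eq_domNum : ∃ S : Finset V, S.card = G.domNum ∧ G.IsDomSet S :=
  Nat.sInf_mem (s := {n | ∃ S : Finset V, S.card = n ∧ G.IsDomSet S})
    ⟨_, univ, rfl, fun v => Or.inl (mem_univ v)⟩

lemma bondageNum_le {B : Finset (Sym2 V)} (hB : ↑B ⊆ G.edgeSet)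
    (hlt : G.domNum < (G.deleteEdges ↑B).domNum) : G.bondageNum ≤ B.card :=
  Nat.sInf_le ⟨B, rfl, hB, hlt⟩

lemma le_bondageNum {m : ℕ} {B₀ : Finset (Sym2 V)} (hB₀ : ↑B₀ ⊆ G.edgeSet)
    (hlt₀ : G.domNum < (G.deleteEdges ↑B₀).domNum)
    (h : ∀ B : Finset (Sym2 V), ↑B ⊆ G.edgeSet → G.domNum < (G.deleteEdges ↑B).domNum →
      m ≤ B.card) : m ≤ G.bondageNum :=
  le_csInf ⟨B₀.card, B₀, rfl, hB₀, hlt₀⟩ fun _ ⟨B, hB, hsub, hlt⟩ => hB ▸ h B hsub hlt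

variable [Nonempty V]

lemma domNum_pos : 0 < G.domNum := by
  obtain ⟨S, hS, hdom⟩ := G.exists_isDomSet_card_eq_domNum
  obtain ⟨v⟩ := ‹Nonempty V›
  rw [← hS, card_pos]
  rcases hdom v with hv | ⟨u, hu, -⟩
  exacts [⟨v, hv⟩, ⟨u, hu⟩]

lemma domNum_le_one_iff : G.domNum ≤ 1 ↔ ∃ v, ∀ w ≠ v, G.Adj v w := by
  constructor
  · intro h
    obtain ⟨S, hS, hdom⟩ := G.exists_isDomSet_card_eq_domNum
    obtain ⟨v, hv⟩ := card_le_one_iff_subset_singleton.1 (hS ▸ h)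
    exact ⟨v, (G.isDomSet_singleton_iff v).1 (hdom.mono hv)⟩
  · rintro ⟨v, hv⟩
    simpa using G.domNum_le_card ((G.isDomSet_singleton_iff v).2 hv)

lemma domNum_top : (⊤ : SimpleGraph V).domNum = 1 :=
  le_antisymm ((domNum_le_one_iff ⊤).2 ⟨Classical.arbitrary V, fun _ hw => hw.symm⟩)
    (domNum_pos ⊤)

lemma domNum_top_lt_domNum_deleteEdges_iff {B : Set (Sym2 V)}
    (hB : B ⊆ (⊤ : SimpleGraph V).edgeSet) :
    (⊤ : SimpleGraph V).domNum < ((⊤ : SimpleGraph V).deleteEdges B).domNum ↔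
      (⊤ : SimpleGraph V).IsEdgeCover B := by
  rw [domNum_top, ← not_le, domNum_le_one_iff, not_exists, IsEdgeCover, and_iff_right hB]
  refine forall_congr' fun v => ⟨fun h => ?_, fun ⟨e, he, hve⟩ hall => ?_⟩
  · push Not at h
    obtain ⟨w, hwv, hvw⟩ := h
    refine ⟨s(v, w), ?_, Sym2.mem_mk_left v w⟩
    by_contra hvw'
    exact hvw ((deleteEdges_adj ..).2 ⟨hwv.symm, hvw'⟩)
  · have hne := Sym2.other_ne ((⊤ : SimpleGraph V).not_isDiag_of_mem_edgeSet (hB he)) hve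
    exact ((deleteEdges_adj ..).1 (hall _ hne)).2 (by rwa [Sym2.other_spec hve])

lemma exists_isEdgeCover_top_fin {n : ℕ} (hn : 2 ≤ n) :
    ∃ B : Finset (Sym2 (Fin n)), B.card ≤ (n + 1) / 2 ∧
      (⊤ : SimpleGraph (Fin n)).IsEdgeCover ↑B := by
  refine ⟨univ.image fun i : Fin ((n + 1) / 2) => s(⟨i, by omega⟩, ⟨i + n / 2, by omega⟩),
    ?_, ?_, fun v => ?_⟩
  · simpa using card_image_le (s := (univ : Finset (Fin ((n + 1) / 2))))
  · intro e he
    obtain ⟨i, -, rfl⟩ := mem_image.1 he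
    simp only [mem_edgeSet, top_adj, ne_eq, Fin.mk.injEq]
    omega
  · by_cases hv : (v : ℕ) < (n + 1) / 2
    · exact ⟨_, mem_image_of_mem _ (mem_univ ⟨v, hv⟩), Sym2.mem_mk_left _ _⟩
    · refine ⟨_, mem_image_of_mem _ (mem_univ ⟨v - n / 2, by omega⟩), ?_⟩
      simp only [Sym2.mem_iff, Fin.ext_iff]
      omega

end SimpleGraph

theorem bondage_complete (n : ℕ) (hn : 2 ≤ n) :
    (⊤ : SimpleGraph (Fin n)).bondageNum = (n + 1) / 2 := by
  have : Nonempty (Fin n) := ⟨⟨0, by omega⟩⟩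
  obtain ⟨B, hcard, hcover⟩ := exists_isEdgeCover_top_fin hn
  have hbond := (domNum_top_lt_domNum_deleteEdges_iff hcover.1).2 hcover
  refine le_antisymm ((bondageNum_le _ hcover.1 hbond).trans hcard) ?_
  refine le_bondageNum _ hcover.1 hbond fun B' hB' hlt => ?_
  have := ((domNum_top_lt_domNum_deleteEdges_iff hB').1 hlt).card_le_two_mul_card
  rw [Fintype.card_fin] at this
  omega
end

section
/- The bondage number of the path P_n (n ≥ 2) equals 2 if n ≡ 1 (mod 3), and 1 otherwise. -/
/-!
In a graph of maximum degree `2` each vertex of a dominating set dominates at most `3`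
vertices, so `γ(P_n) ≥ ⌈n/3⌉`, and every third vertex gives equality. Deleting one edge splits
`P_n` into `P_a` and `P_{n-a}`, dominated by `⌈a/3⌉ + ⌈(n-a)/3⌉` vertices, which is `⌈n/3⌉`
when `n ≡ 1 (mod 3)`. Deleting the first edge (or, when `n ≡ 1 (mod 3)`, the first two) isolates
end vertices, which must then lie in every dominating set; counting the rest shows `γ` goes up.
-/

open SimpleGraph

variable {V : Type*}

namespace SimpleGraph

section Domination

variable [Fintype V] {G : SimpleGraph V}

theorem IsDomSet.domNum_le {S : Finset V} (hS : G.IsDomSet S) : G.domNum ≤ S.card :=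
  Nat.sInf_le ⟨S, rfl, hS⟩

theorem le_domNum {m : ℕ} (h : ∀ S : Finset V, G.IsDomSet S → m ≤ S.card) :
    m ≤ G.domNum :=
  le_csInf ⟨_, Finset.univ, rfl, fun v => Or.inl (Finset.mem_univ v)⟩
    fun _ ⟨S, hS, hdom⟩ => hS ▸ h S hdom

theorem card_le_mul_card_of_dominates [DecidableRel G.Adj] {d : ℕ}
    (hd : ∀ v, G.degree v ≤ d) {S T : Finset V}
    (hT : ∀ v ∈ T, v ∈ S ∨ ∃ u ∈ S, G.Adj u v) :
    T.card ≤ (d + 1) * S.card := by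
  classical
  have hsub : T ⊆ S.biUnion fun u => insert u (G.neighborFinset u) := by
    intro v hv
    rcases hT v hv with hvS | ⟨u, hu, huv⟩
    · exact Finset.mem_biUnion.2 ⟨v, hvS, Finset.mem_insert_self _ _⟩
    · exact Finset.mem_biUnion.2
        ⟨u, hu, Finset.mem_insert_of_mem ((G.mem_neighborFinset u v).2 huv)⟩
  calc T.card ≤ ∑ u ∈ S, (insert u (G.neighborFinset u)).card :=
        (Finset.card_le_card hsub).trans Finset.card_biUnion_le
    _ ≤ ∑ _u ∈ S, (d + 1) := Finset.sum_le_sum fun u _ =>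
        (Finset.card_insert_le _ _).trans
          (Nat.succ_le_succ ((G.card_neighborFinset_eq_degree u).trans_le (hd u)))
    _ = (d + 1) * S.card := by rw [Finset.sum_const, smul_eq_mul, mul_comm]

theorem le_domNum_of_isolated [DecidableRel G.Adj] {d : ℕ} (hd : ∀ v, G.degree v ≤ d)
    {I : Finset V} (hI : ∀ v ∈ I, ∀ u, ¬G.Adj u v) :
    I.card + (Fintype.card V - I.card + d) / (d + 1) ≤ G.domNum := by
  classical
  refine le_domNum fun S hS => ?_
  have hIS : I ⊆ S := fun v hv => (hS v).resolve_right fun ⟨u, _, huv⟩ => hI v hv u huv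
  have hcount : (Finset.univ \ I).card ≤ (d + 1) * (S \ I).card := by
    refine card_le_mul_card_of_dominates hd fun v hv => ?_
    have hvI := (Finset.mem_sdiff.1 hv).2
    rcases hS v with hvS | ⟨u, hu, huv⟩
    · exact Or.inl (Finset.mem_sdiff.2 ⟨hvS, hvI⟩)
    · exact Or.inr ⟨u, Finset.mem_sdiff.2 ⟨hu, fun huI => hI u huI v huv.symm⟩, huv⟩
  rw [Finset.card_sdiff_of_subset I.subset_univ, Finset.card_univ,
    Finset.card_sdiff_of_subset hIS] at hcount
  have hle := Finset.card_le_card hIS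
  have : (Fintype.card V - I.card + d) / (d + 1) ≤ S.card - I.card :=
    Nat.lt_succ_iff.1 ((Nat.div_lt_iff_lt_mul (Nat.succ_pos d)).2 (by nlinarith))
  omega

theorem bondageNum_eq_card (B : Finset (Sym2 V)) (hB : ↑B ⊆ G.edgeSet)
    (hlt : G.domNum < (G.deleteEdges ↑B).domNum)
    (hmin : ∀ B' : Finset (Sym2 V), B'.Nonempty → B'.card < B.card → ↑B' ⊆ G.edgeSet →
      (G.deleteEdges ↑B').domNum ≤ G.domNum) :
    G.bondageNum = B.card := by
  refine le_antisymm (Nat.sInf_le ⟨B, rfl, hB, hlt⟩) (le_csInf ⟨_, B, rfl, hB, hlt⟩ ?_)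
  rintro _ ⟨B', rfl, hB', hlt'⟩
  by_contra! hcard
  obtain rfl | hne := B'.eq_empty_or_nonempty
  · simp at hlt'
  · exact (hmin B' hne hcard hB').not_gt hlt'

end Domination

section Path

variable {n : ℕ}

theorem degree_le_two_of_le_pathGraph {G : SimpleGraph (Fin n)} [DecidableRel G.Adj]
    (hG : G ≤ pathGraph n) (v : Fin n) : G.degree v ≤ 2 := by
  rw [← card_neighborFinset_eq_degree]
  calc (G.neighborFinset v).card ≤ ({v.val - 1, v.val + 1} : Finset ℕ).card := by
        refine Finset.card_le_card_of_injOn Fin.val (fun u hu => ?_) Fin.val_injective.injOn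
        have := pathGraph_adj.1 (hG ((G.mem_neighborFinset v u).1 hu))
        simp only [Finset.coe_insert, Finset.coe_singleton, Set.mem_insert_iff,
          Set.mem_singleton_iff]
        omega
    _ ≤ 2 := Finset.card_le_two

def segmentDomSet (n l u : ℕ) : Finset (Fin n) :=
  Finset.univ.filter fun v =>
    v.val ∈ (Finset.range ((u - l + 2) / 3)).image fun k => min (l + 3 * k + 1) (u - 1)

theorem card_segmentDomSet_le (l u : ℕ) : (segmentDomSet n l u).card ≤ (u - l + 2) / 3 :=
  calc (segmentDomSet n l u).card
      ≤ ((Finset.range ((u - l + 2) / 3)).image fun k => min (l + 3 * k + 1) (u - 1)).card :=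
        Finset.card_le_card_of_injOn Fin.val (fun _ hv => (Finset.mem_filter.1 hv).2)
          Fin.val_injective.injOn
    _ ≤ (u - l + 2) / 3 := Finset.card_image_le.trans (Finset.card_range _).le

theorem segmentDomSet_dominates {l u : ℕ} (hu : u ≤ n) {G : SimpleGraph (Fin n)}
    (hG : ∀ i j : Fin n, l ≤ i.val → j.val < u → i.val + 1 = j.val → G.Adj i j)
    (v : Fin n) (hlv : l ≤ v.val) (hvu : v.val < u) :
    v ∈ segmentDomSet n l u ∨ ∃ w ∈ segmentDomSet n l u, G.Adj w v := by
  set w : Fin n := ⟨min (l + 3 * ((v.val - l) / 3) + 1) (u - 1), by omega⟩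
  have hwD : w ∈ segmentDomSet n l u :=
    Finset.mem_filter.2 ⟨Finset.mem_univ _,
      Finset.mem_image.2 ⟨(v.val - l) / 3, Finset.mem_range.2 (by omega), rfl⟩⟩
  have hwv : w.val = min (l + 3 * ((v.val - l) / 3) + 1) (u - 1) := rfl
  rcases (show w.val = v.val ∨ w.val + 1 = v.val ∨ v.val + 1 = w.val by omega) with h | h | h
  · exact Or.inl (Fin.ext h ▸ hwD)
  · exact Or.inr ⟨w, hwD, hG w v (by omega) hvu h⟩
  · exact Or.inr ⟨w, hwD, (hG v w hlv (by omega) h).symm⟩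

theorem domNum_le_of_adj_succ_of_ne {a : ℕ} (ha : a ≤ n) {G : SimpleGraph (Fin n)}
    (hG : ∀ i j : Fin n, i.val + 1 = j.val → j.val ≠ a → G.Adj i j) :
    G.domNum ≤ (a + 2) / 3 + (n - a + 2) / 3 := by
  classical
  have hdom : G.IsDomSet (segmentDomSet n 0 a ∪ segmentDomSet n a n) := by
    intro v
    by_cases hva : v.val < a
    · rcases segmentDomSet_dominates (l := 0) ha (fun i j _ hj hij => hG i j hij (by omega))
        v (Nat.zero_le _) hva with h | ⟨w, hw, hwv⟩
      · exact Or.inl (Finset.mem_union_left _ h)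
      · exact Or.inr ⟨w, Finset.mem_union_left _ hw, hwv⟩
    · rcases segmentDomSet_dominates (l := a) le_rfl
        (fun i j hi _ hij => hG i j hij (by omega)) v (by omega) v.isLt with h | ⟨w, hw, hwv⟩
      · exact Or.inl (Finset.mem_union_right _ h)
      · exact Or.inr ⟨w, Finset.mem_union_right _ hw, hwv⟩
  calc G.domNum ≤ _ := hdom.domNum_le
    _ ≤ _ := Finset.card_union_le _ _
    _ ≤ (a - 0 + 2) / 3 + (n - a + 2) / 3 :=
        add_le_add (card_segmentDomSet_le 0 a) (card_segmentDomSet_le a n)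
    _ = _ := by rw [Nat.sub_zero]

theorem le_domNum_deleteEdges_pathGraph {B : Set (Sym2 (Fin n))} {I : Finset (Fin n)}
    (hI : ∀ v ∈ I, ∀ u, (pathGraph n).Adj u v → s(u, v) ∈ B) :
    I.card + (n - I.card + 2) / 3 ≤ ((pathGraph n).deleteEdges B).domNum := by
  classical
  simpa using le_domNum_of_isolated (degree_le_two_of_le_pathGraph (deleteEdges_le B))
    fun v hv u huv => (deleteEdges_adj.1 huv).2 (hI v hv u (deleteEdges_adj.1 huv).1)

theorem domNum_pathGraph (n : ℕ) : (pathGraph n).domNum = (n + 2) / 3 := by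
  classical
  refine le_antisymm ?_ ?_
  · simpa using domNum_le_of_adj_succ_of_ne (Nat.zero_le n)
      fun i j hij _ => pathGraph_adj.2 (Or.inl hij)
  · simpa using le_domNum_deleteEdges_pathGraph (B := ∅) (I := ∅) (by simp)

theorem domNum_deleteEdges_pathGraph_le (h : n % 3 = 1) {e : Sym2 (Fin n)}
    (he : e ∈ (pathGraph n).edgeSet) :
    ((pathGraph n).deleteEdges {e}).domNum ≤ (pathGraph n).domNum := by
  induction e using Sym2.ind with
  | _ x y =>
  wlog hxy : x.val + 1 = y.val generalizing x y
  · rw [Sym2.eq_swap] at he ⊢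
    exact this y x he ((pathGraph_adj.1 ((pathGraph n).mem_edgeSet.1 he)).resolve_right hxy)
  have hcut := domNum_le_of_adj_succ_of_ne y.isLt.le
    (G := (pathGraph n).deleteEdges {s(x, y)})
    fun i j hij hjy => deleteEdges_adj.2 ⟨pathGraph_adj.2 (Or.inl hij), by
      simp only [Set.mem_singleton_iff, Sym2.eq_iff, Fin.ext_iff]; omega⟩
  rw [domNum_pathGraph]
  omega

theorem lt_domNum_deleteEdges_pathGraph_zero_one (m : ℕ) (h : (m + 2) % 3 ≠ 1) :
    (pathGraph (m + 2)).domNum < ((pathGraph (m + 2)).deleteEdges {s(0, 1)}).domNum := by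
  have hiso := le_domNum_deleteEdges_pathGraph (n := m + 2) (B := {s(0, 1)}) (I := {0})
    fun v hv u huv => by
      rw [Finset.mem_singleton] at hv
      subst hv
      have := pathGraph_adj.1 huv
      simp only [Set.mem_singleton_iff, Sym2.eq_iff, Fin.ext_iff, Fin.val_zero, Fin.val_one,
        and_true] at this ⊢
      omega
  rw [Finset.card_singleton] at hiso
  rw [domNum_pathGraph]
  omega

theorem lt_domNum_deleteEdges_pathGraph_zero_one_two (m : ℕ) :
    (pathGraph (m + 3)).domNum <
      ((pathGraph (m + 3)).deleteEdges {s(0, 1), s(1, 2)}).domNum := by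
  have hiso := le_domNum_deleteEdges_pathGraph (n := m + 3) (B := {s(0, 1), s(1, 2)})
    (I := {0, 1}) fun v hv u huv => by
      have := pathGraph_adj.1 huv
      simp only [Finset.mem_insert, Finset.mem_singleton, Set.mem_insert_iff,
        Set.mem_singleton_iff, Sym2.eq_iff, Fin.ext_iff, Fin.val_zero, Fin.val_one,
        Fin.val_two] at hv this ⊢
      omega
  rw [Finset.card_pair (by simp)] at hiso
  rw [domNum_pathGraph]
  omega

end Path

end SimpleGraph

theorem bondage_path (n : ℕ) (hn : 2 ≤ n) :
    (SimpleGraph.pathGraph n).bondageNum = if n % 3 = 1 then 2 else 1 := by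
  split_ifs with h
  · obtain ⟨m, rfl⟩ : ∃ m, n = m + 3 := ⟨n - 3, by omega⟩
    have hcard : ({s(0, 1), s(1, 2)} : Finset (Sym2 (Fin (m + 3)))).card = 2 :=
      Finset.card_pair (by simp only [ne_eq, Sym2.eq_iff, Fin.ext_iff, Fin.val_zero,
        Fin.val_one, Fin.val_two]; omega)
    refine (bondageNum_eq_card _ ?_ ?_ fun B hB hcardB hsub => ?_).trans hcard
    · simp only [Finset.coe_insert, Finset.coe_singleton, Set.insert_subset_iff,
        Set.singleton_subset_iff, mem_edgeSet, pathGraph_adj, Fin.val_zero, Fin.val_one,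
        Fin.val_two, true_or, and_self]
    · simpa using lt_domNum_deleteEdges_pathGraph_zero_one_two m
    · rw [hcard] at hcardB
      obtain ⟨e, rfl⟩ : ∃ e, B = {e} := Finset.card_eq_one.1 (by have := hB.card_pos; omega)
      simpa using domNum_deleteEdges_pathGraph_le h (hsub (Finset.mem_singleton_self e))
  · obtain ⟨m, rfl⟩ : ∃ m, n = m + 2 := ⟨n - 2, by omega⟩
    refine (bondageNum_eq_card {s(0, 1)} ?_ ?_ fun B hB hcardB _ => ?_).trans
      (Finset.card_singleton _)
    · simp [pathGraph_adj]
    · simpa using lt_domNum_deleteEdges_pathGraph_zero_one m h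
    · rw [Finset.card_singleton] at hcardB
      exact absurd hB.card_pos (by omega)
end

section
/- For any two adjacent vertices x and y in a graph G, b(G) ≤ deg(x) + deg(y) − 1 − |N(x) ∩ N(y)|. -/
open SimpleGraph

variable {V : Type*}

open Finset in
theorem bondage_le_degree_add_degree_sub_common [Fintype V] [DecidableEq V]
    (G : SimpleGraph V) [DecidableRel G.Adj] {x y : V} (hxy : G.Adj x y) :
    G.bondageNum ≤
      G.degree x + G.degree y - 1 - (G.neighborFinset x ∩ G.neighborFinset y).card := by
  classical
  set Nx := G.neighborFinset x with hNx
  set Ny := G.neighborFinset y with hNy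
  set B1 : Finset (Sym2 V) := Nx.image (fun u => s(x, u)) with hB1
  set B2 : Finset (Sym2 V) := (Ny \ insert x Nx).image (fun u => s(y, u)) with hB2
  set B : Finset (Sym2 V) := B1 ∪ B2 with hB
  have hxNy : x ∈ Ny := by simp [hNy, SimpleGraph.mem_neighborFinset, hxy.symm]
  have hxNx : x ∉ Nx := by simp [hNx]
  -- cardinality bounds
  have hB1card : B1.card = Nx.card :=
    card_image_of_injective _ (fun a b h => Sym2.congr_right.mp h)
  have hB2card : B2.card = (Ny \ insert x Nx).card :=
    card_image_of_injective _ (fun a b h => Sym2.congr_right.mp h)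
  have hsub : insert x (Nx ∩ Ny) ⊆ Ny := by
    intro u hu
    rcases Finset.mem_insert.1 hu with h | h
    · rw [h]; exact hxNy
    · exact (Finset.mem_inter.1 h).2
  have hins : 1 + (Nx ∩ Ny).card ≤ Ny.card := by
    have := Finset.card_le_card hsub
    rwa [Finset.card_insert_of_notMem (fun h => hxNx (Finset.mem_inter.1 h).1),
      add_comm] at this
  have hsdcard : (Ny \ insert x Nx).card = Ny.card - (1 + (Nx ∩ Ny).card) := by
    have h1 : Ny \ insert x Nx = Ny \ insert x (Nx ∩ Ny) := by
      ext u
      simp only [mem_sdiff, mem_insert, mem_inter]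
      tauto
    rw [h1, Finset.card_sdiff_of_subset hsub,
      Finset.card_insert_of_notMem (fun h => hxNx (Finset.mem_inter.1 h).1), add_comm]
  have hBcard : B.card ≤ G.degree x + G.degree y - 1 - (Nx ∩ Ny).card := by
    have h1 : B.card ≤ B1.card + B2.card := Finset.card_union_le B1 B2
    have hdx : G.degree x = Nx.card := rfl
    have hdy : G.degree y = Ny.card := rfl
    omega
  -- B is a set of edges of G
  have hBedge : ↑B ⊆ G.edgeSet := by
    intro e he
    simp only [hB, coe_union, Set.mem_union, mem_coe, hB1, hB2, Finset.mem_image] at he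
    rcases he with ⟨u, hu, rfl⟩ | ⟨u, hu, rfl⟩
    · exact ((SimpleGraph.mem_neighborFinset _ _ _).1 hu : G.Adj x u)
    · exact ((SimpleGraph.mem_neighborFinset _ _ _).1 (Finset.mem_sdiff.1 hu).1 : G.Adj y u)
  -- removing B increases domination number
  have hdomne : {n | ∃ S : Finset V, S.card = n ∧ (G.deleteEdges ↑B).IsDomSet S}.Nonempty :=
    ⟨(Finset.univ : Finset V).card, Finset.univ, rfl, fun v => Or.inl (Finset.mem_univ v)⟩
  have hmem : ∃ S : Finset V, S.card = (G.deleteEdges ↑B).domNum ∧ (G.deleteEdges ↑B).IsDomSet S :=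
    Nat.sInf_mem hdomne
  obtain ⟨S, hScard, hSdom⟩ := hmem
  have hxiso : ∀ u, ¬ (G.deleteEdges ↑B).Adj u x := by
    intro u h
    rw [SimpleGraph.deleteEdges_adj] at h
    apply h.2
    simp only [hB, coe_union, Set.mem_union, mem_coe, hB1, Finset.mem_image]
    left
    exact ⟨u, (SimpleGraph.mem_neighborFinset _ _ _).2 h.1.symm, Sym2.eq_swap⟩
  have hxS : x ∈ S := by
    rcases hSdom x with h | ⟨u, _, hadj⟩
    · exact h
    · exact absurd hadj (hxiso u)
  set T := S.erase x with hT
  have hTdom : G.IsDomSet T := by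
    intro v
    by_cases hv : v = x
    · rw [hv]
      right
      rcases hSdom y with hy | ⟨u, hu, hadj⟩
      · exact ⟨y, Finset.mem_erase.2 ⟨hxy.ne', hy⟩, hxy.symm⟩
      · have hux : u ≠ x := by
          intro h; rw [h] at hadj; exact hxiso y hadj.symm
        rw [SimpleGraph.deleteEdges_adj] at hadj
        have huNx : u ∈ Nx := by
          by_contra hno
          apply hadj.2
          simp only [hB, coe_union, Set.mem_union, mem_coe, hB2, Finset.mem_image]
          right
          refine ⟨u, Finset.mem_sdiff.2 ⟨(SimpleGraph.mem_neighborFinset _ _ _).2 hadj.1.symm, ?_⟩,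
            Sym2.eq_swap⟩
          simp only [Finset.mem_insert]
          tauto
        exact ⟨u, Finset.mem_erase.2 ⟨hux, hu⟩, ((SimpleGraph.mem_neighborFinset _ _ _).1 huNx).symm⟩
    · rcases hSdom v with h | ⟨u, hu, hadj⟩
      · exact Or.inl (Finset.mem_erase.2 ⟨hv, h⟩)
      · have hux : u ≠ x := by
          intro h; rw [h] at hadj; exact hxiso v hadj.symm
        exact Or.inr ⟨u, Finset.mem_erase.2 ⟨hux, hu⟩,
          (SimpleGraph.deleteEdges_adj.1 hadj).1⟩
  have hlt : G.domNum < (G.deleteEdges ↑B).domNum := by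
    have h1 : G.domNum ≤ T.card :=
      Nat.sInf_le (show ∃ S : Finset V, S.card = T.card ∧ G.IsDomSet S from ⟨T, rfl, hTdom⟩)
    have h2 : T.card = S.card - 1 := Finset.card_erase_of_mem hxS
    have h3 : 1 ≤ S.card := Finset.card_pos.2 ⟨x, hxS⟩
    omega
  exact le_trans (Nat.sInf_le ⟨B, rfl, hBedge, hlt⟩) hBcard
end

section
/- In any connected graph G there exist two distinct vertices x and y with distance d(x,y) ≤ 2 such that deg(x) + deg(y) ≤ 2·(average degree of G). -/
/-!
Put `f v = |V| · deg v - 2|E|`, so that `∑ f = 0` and the claim is that `f x + f y ≤ 0` for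
some pair of distinct vertices at distance at most `2`. If not, the vertices with `f ≤ 0` form
a nonempty set `A`; assign to every `v ∈ A` a neighbour `w v`. Then `w v ∉ A`, and `w` is
injective on `A` because two vertices of `A` with a common neighbour are at distance `2`.
Splitting `∑ f` into the pairs `f v + f (w v) > 0` and the remaining vertices, where `f > 0`,
gives `∑ f > 0`.
-/

open SimpleGraph

variable {V : Type*}

open Finset

namespace SimpleGraph

variable {G : SimpleGraph V}

lemma dist_le_two_of_adj {x y : V} (h : G.Adj x y) : G.dist x y ≤ 2 := by
  rw [dist_eq_one_iff_adj.2 h]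
  omega

lemma dist_le_two_of_adj_of_adj {x y z : V} (hxz : G.Adj x z) (hzy : G.Adj z y) :
    G.dist x y ≤ 2 :=
  G.dist_le (.cons hxz (.cons hzy .nil))

variable {R : Type*} [AddCommMonoid R] [LinearOrder R] [IsOrderedCancelAddMonoid R]

lemma sum_pos_of_forall_close_add_pos [Fintype V] (hadj : ∀ v, ∃ w, G.Adj v w) {f : V → R}
    (hclose : ∀ x y, x ≠ y → G.dist x y ≤ 2 → 0 < f x + f y) {v₀ : V} (hv₀ : f v₀ ≤ 0) :
    0 < ∑ v, f v := by
  classical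
  choose w hw using hadj
  set A := univ.filter (f · ≤ 0) with hA
  have hfA {v : V} : v ∈ A ↔ f v ≤ 0 := by simp [hA]
  have hpair {v : V} (hv : v ∈ A) : 0 < f v + f (w v) :=
    hclose _ _ (hw v).ne (dist_le_two_of_adj (hw v))
  have hwA {v : V} (hv : v ∈ A) : w v ∉ A := fun hwv =>
    (add_nonpos (hfA.1 hv) (hfA.1 hwv)).not_gt (hpair hv)
  have hinj : Set.InjOn w A := by
    intro v hv v' hv' hvv'
    by_contra hne
    have hadj' : G.Adj (w v) v' := by rw [hvv']; exact (hw v').symm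
    exact (add_nonpos (hfA.1 hv) (hfA.1 hv')).not_gt
      (hclose v v' hne (dist_le_two_of_adj_of_adj (hw v) hadj'))
  have hdisj : Disjoint A (A.image w) := by
    refine Finset.disjoint_left.2 fun v hv hv_img => ?_
    obtain ⟨v', hv', rfl⟩ := mem_image.1 hv_img
    exact hwA hv' hv
  calc 0 < ∑ v ∈ A, (f v + f (w v)) := sum_pos (fun v hv => hpair hv) ⟨v₀, hfA.2 hv₀⟩
    _ ≤ ∑ v ∈ A, (f v + f (w v)) + ∑ v ∈ (A ∪ A.image w)ᶜ, f v :=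
      le_add_of_nonneg_right <| sum_nonneg fun v hv =>
        (not_le.1 fun h => (mem_compl.1 hv) (mem_union_left _ (hfA.2 h))).le
    _ = ∑ v, f v := by
      rw [sum_add_distrib, ← sum_image hinj, ← sum_union hdisj, sum_add_sum_compl]

lemma exists_close_pair_add_nonpos [Fintype V] [Nonempty V] (hadj : ∀ v, ∃ w, G.Adj v w)
    {f : V → R} (hf : ∑ v, f v ≤ 0) : ∃ x y, x ≠ y ∧ G.dist x y ≤ 2 ∧ f x + f y ≤ 0 := by
  by_contra! hclose
  obtain ⟨v₀, -, hv₀⟩ :=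
    exists_le_of_sum_le (f := f) (g := 0) univ_nonempty (by simpa using hf)
  exact (sum_pos_of_forall_close_add_pos hadj hclose hv₀).not_ge hf

end SimpleGraph

theorem exists_close_pair_degree_le_twice_avg [Fintype V]
    (G : SimpleGraph V) [DecidableRel G.Adj]
    (hG : G.Connected) (h2 : 2 ≤ Fintype.card V) :
    ∃ x y : V, x ≠ y ∧ G.dist x y ≤ 2 ∧
      (G.degree x + G.degree y) * Fintype.card V ≤ 4 * G.edgeFinset.card := by
  have : Nontrivial V := Fintype.one_lt_card_iff_nontrivial.1 h2
  have : Nonempty V := hG.nonempty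
  let f : V → ℤ := fun v => G.degree v * Fintype.card V - 2 * #G.edgeFinset
  have hf : ∑ v, f v = 0 := by
    simp only [f, sum_sub_distrib, ← sum_mul, sum_const, card_univ]
    rw [← Nat.cast_sum, G.sum_degrees_eq_twice_card_edges]
    push_cast
    ring
  obtain ⟨x, y, hxy, hdist, hxy_sum⟩ :=
    G.exists_close_pair_add_nonpos hG.preconnected.exists_adj_of_nontrivial hf.le
  refine ⟨x, y, hxy, hdist, ?_⟩
  simp only [f] at hxy_sum
  zify
  linarith
end

section
/- If G is a graph without isolated vertices satisfying γ(G) = β(G), where β(G) is the vertex covering number, then b(G) ≥ δ(G). -/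
/-!
Deleting fewer than `δ(G)` edges leaves no vertex isolated, and in a graph without isolated
vertices every vertex cover is dominating. Hence for such an edge set `B`,
`γ(G - B) ≤ β(G - B) ≤ β(G) = γ(G)`, so `B` does not raise the domination number. When `δ(G) > 0`
some edge set does raise `γ` (deleting all edges raises it to `|V|`), so the infimum defining the
bondage number is over a nonempty set.
-/

open SimpleGraph

variable {V : Type*}

/-- The vertex covering number of `G`: the minimum size of a set of vertices
meeting every edge. -/
noncomputable def SimpleGraph.coverNum [Fintype V] (G : SimpleGraph V) : ℕ :=
  sInf {n | ∃ S : Finset V, S.card = n ∧ ∀ e ∈ G.edgeSet, ∃ v ∈ S, v ∈ e}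

namespace SimpleGraph

open Finset

variable {G H : SimpleGraph V} {S : Finset V}

theorem isVertexCover_coe_iff :
    G.IsVertexCover ↑S ↔ ∀ e ∈ G.edgeSet, ∃ v ∈ S, v ∈ e := by
  refine ⟨fun hS e he => ?_, fun hS v w hvw => ?_⟩
  · induction e using Sym2.ind with
    | h v w =>
      rcases hS he with hv | hw
      exacts [⟨v, hv, Sym2.mem_mk_left v w⟩, ⟨w, hw, Sym2.mem_mk_right v w⟩]
  · obtain ⟨u, hu, hue⟩ := hS s(v, w) hvw
    rcases Sym2.mem_iff.1 hue with rfl | rfl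
    exacts [Or.inl hu, Or.inr hu]

theorem IsVertexCover.isDomSet (hG : ∀ v, ∃ w, G.Adj v w) (hS : G.IsVertexCover ↑S) :
    G.IsDomSet S := by
  intro v
  obtain ⟨w, hvw⟩ := hG v
  rcases hS hvw with hv | hw
  exacts [Or.inl hv, Or.inr ⟨w, hw, hvw.symm⟩]

section Fintype

variable [Fintype V]

theorem IsDomSet.domNum_le_card (hS : G.IsDomSet S) : G.domNum ≤ #S :=
  Nat.sInf_le ⟨S, rfl, hS⟩

theorem IsVertexCover.coverNum_le_card (hS : G.IsVertexCover ↑S) : G.coverNum ≤ #S :=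
  Nat.sInf_le ⟨S, rfl, isVertexCover_coe_iff.1 hS⟩

theorem exists_isVertexCover_card_eq_coverNum (G : SimpleGraph V) :
    ∃ S : Finset V, #S = G.coverNum ∧ G.IsVertexCover ↑S := by
  obtain ⟨S, hS, hcover⟩ := Nat.sInf_mem (s := {n | ∃ S : Finset V, #S = n ∧
      ∀ e ∈ G.edgeSet, ∃ v ∈ S, v ∈ e}) ⟨_, univ, rfl, fun e _ => ⟨e.out.1, mem_univ _, e.out_fst_mem⟩⟩
  exact ⟨S, hS, isVertexCover_coe_iff.2 hcover⟩

theorem coverNum_mono (h : G ≤ H) : G.coverNum ≤ H.coverNum := by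
  obtain ⟨S, hS, hcover⟩ := H.exists_isVertexCover_card_eq_coverNum
  exact hS ▸ (hcover.mono h).coverNum_le_card

theorem domNum_le_coverNum (hG : ∀ v, ∃ w, G.Adj v w) : G.domNum ≤ G.coverNum := by
  obtain ⟨S, hS, hcover⟩ := G.exists_isVertexCover_card_eq_coverNum
  exact hS ▸ (hcover.isDomSet hG).domNum_le_card

theorem domNum_lt_card_of_adj {u v : V} (huv : G.Adj u v) : G.domNum < Fintype.card V := by
  classical
  have hdom : G.IsDomSet (univ.erase v) := fun w => by
    by_cases hw : w = v
    · exact Or.inr ⟨u, mem_erase.2 ⟨huv.ne, mem_univ u⟩, hw ▸ huv⟩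
    · exact Or.inl (mem_erase.2 ⟨hw, mem_univ w⟩)
  calc G.domNum ≤ #(univ.erase v) := hdom.domNum_le_card
    _ < #(univ : Finset V) := card_erase_lt_of_mem (mem_univ v)
    _ = Fintype.card V := card_univ

theorem card_le_domNum_bot : Fintype.card V ≤ (⊥ : SimpleGraph V).domNum := by
  refine le_csInf ⟨_, univ, rfl, fun v => Or.inl (mem_univ v)⟩ ?_
  rintro _ ⟨S, rfl, hS⟩
  have hS_univ : S = univ := eq_univ_of_forall fun v => (hS v).resolve_right (by simp)
  rw [hS_univ, card_univ]

theorem domNum_lt_domNum_deleteEdges_edgeSet {u v : V} (huv : G.Adj u v) :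
    G.domNum < (G.deleteEdges G.edgeSet).domNum := by
  rw [deleteEdges_edgeSet, sdiff_self]
  exact (domNum_lt_card_of_adj huv).trans_le card_le_domNum_bot

theorem exists_adj_deleteEdges_of_card_lt_degree [DecidableRel G.Adj] [DecidableEq V]
    {B : Finset (Sym2 V)} {v : V} (hB : #B < G.degree v) :
    ∃ w, (G.deleteEdges ↑B).Adj v w := by
  obtain ⟨e, he, heB⟩ : ∃ e ∈ G.incidenceFinset v, e ∉ B :=
    not_subset.1 fun hsub => (card_le_card hsub).not_gt (by simpa using hB)
  obtain ⟨he, hve⟩ := (mem_incidenceFinset G v e).1 he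
  obtain ⟨w, rfl⟩ := Sym2.mem_iff_exists.1 hve
  exact ⟨w, (deleteEdges_adj ..).2 ⟨he, by simpa using heB⟩⟩

theorem domNum_deleteEdges_le_of_card_lt_minDegree [DecidableRel G.Adj]
    (hG : G.coverNum ≤ G.domNum) {B : Finset (Sym2 V)} (hB : #B < G.minDegree) :
    (G.deleteEdges ↑B).domNum ≤ G.domNum := by
  classical
  have hadj : ∀ v, ∃ w, (G.deleteEdges ↑B).Adj v w := fun v =>
    exists_adj_deleteEdges_of_card_lt_degree (hB.trans_le (G.minDegree_le_degree v))
  calc (G.deleteEdges ↑B).domNum ≤ (G.deleteEdges ↑B).coverNum := domNum_le_coverNum hadj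
    _ ≤ G.coverNum := coverNum_mono (G.deleteEdges_le _)
    _ ≤ G.domNum := hG

end Fintype

end SimpleGraph

theorem minDegree_le_bondage_of_domNum_eq_coverNum_general [Fintype V]
    (G : SimpleGraph V) [DecidableRel G.Adj]
    (h : G.domNum = G.coverNum) :
    G.minDegree ≤ G.bondageNum := by
  classical
  obtain hδ | hδ := Nat.eq_zero_or_pos G.minDegree
  · exact hδ ▸ Nat.zero_le _
  obtain ⟨v⟩ : Nonempty V := not_isEmpty_iff.1 fun _ => by simp at hδ
  obtain ⟨w, hvw⟩ := G.degree_pos_iff_exists_adj v |>.1 (hδ.trans_le (G.minDegree_le_degree v))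
  have hincrease : G.domNum < (G.deleteEdges ↑G.edgeFinset).domNum := by
    simpa using domNum_lt_domNum_deleteEdges_edgeSet hvw
  refine le_csInf ⟨_, G.edgeFinset, rfl, by simp, hincrease⟩ ?_
  rintro _ ⟨B, rfl, -, hlt⟩
  by_contra! hB
  exact (domNum_deleteEdges_le_of_card_lt_minDegree h.ge hB).not_gt hlt

theorem minDegree_le_bondage_of_domNum_eq_coverNum [Fintype V]
    (G : SimpleGraph V) [DecidableRel G.Adj]
    (hiso : ∀ v : V, 0 < G.degree v) (h : G.domNum = G.coverNum) :
    G.minDegree ≤ G.bondageNum :=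
  minDegree_le_bondage_of_domNum_eq_coverNum_general G h
end
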